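/- A Kobayashi hyperbolic domain D ⊂ ℂ^d that is circularlike and spirallike with respect to a complete globally asymptotically stable holomorphic vector field V with V(0) = 0 cannot contain a sequence (z_k) with ‖z_k‖ → ∞; equivalently, every such hyperbolic domain is bounded. -/

import Mathlib

open Metric Set Filter Complex

/-- The inverse hyperbolic tangent: `arctanh r = (1/2) · log ((1+r)/(1-r))`. -/
noncomputable def arctanh (r : ℝ) : ℝ := (1 / 2) * Real.log ((1 + r) / (1 - r))

/-- The Poincaré distance on the unit disk: `ρ(a,b) = arctanh |(a-b)/(1 - conj a · b)|`. -/
noncomputable def diskDist (a b : ℂ) : ℝ :=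
  arctanh ‖(a - b) / (1 - (starRingEnd ℂ) a * b)‖

/-- The Kobayashi pseudodistance of a domain `D ⊆ ℂ^d`: the infimum, over chains of analytic
discs joining `p` to `q` within `D`, of the sums of Poincaré distances of the parameters. -/
noncomputable def kobayashiDist {d : ℕ} (D : Set (EuclideanSpace ℂ (Fin d)))
    (p q : EuclideanSpace ℂ (Fin d)) : ℝ :=
  sInf {r : ℝ | ∃ (n : ℕ) (φ : Fin (n + 1) → ℂ → EuclideanSpace ℂ (Fin d))
      (a b : Fin (n + 1) → ℂ),
    (∀ i, DifferentiableOn ℂ (φ i) (ball (0 : ℂ) 1) ∧ MapsTo (φ i) (ball (0 : ℂ) 1) D ∧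
      a i ∈ ball (0 : ℂ) 1 ∧ b i ∈ ball (0 : ℂ) 1) ∧
    φ 0 (a 0) = p ∧ φ (Fin.last n) (b (Fin.last n)) = q ∧
    (∀ i : Fin n, φ i.castSucc (b i.castSucc) = φ i.succ (a i.succ)) ∧
    r = ∑ i, diskDist (a i) (b i)}

/-- A domain is Kobayashi hyperbolic if its Kobayashi pseudodistance is a true distance,
i.e. positive off the diagonal. -/
def KobayashiHyperbolic {d : ℕ} (D : Set (EuclideanSpace ℂ (Fin d))) : Prop :=
  ∀ p ∈ D, ∀ q ∈ D, p ≠ q → 0 < kobayashiDist D p q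

/-!
If `D` were unbounded, points of `D` arbitrarily far out would need arbitrarily long real
times `t_k` to be carried by the flow onto a small sphere around the attractor `0`; along a
subsequence these images `X t_k z_k` converge to some `w ≠ 0`, and `X S w ≠ w` for some `S ≥ 0`.
Circularlike plus spirallike makes `D` invariant under `X μ` for `Re μ ≥ 0`, so the Cayley disc
`ζ ↦ X (t_k (1 + ζ)/(1 - ζ)) z_k` lies in `D`; it joins `X t_k z_k` to `X (t_k + S) z_k` at
Poincaré distance `arctanh (S / (2 t_k + S)) → 0`. Closing the chain with two short straight
discs at `w` and `X S w` gives `K_D(w, X S w) = 0`, contradicting hyperbolicity.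
-/

open Topology

lemma arctanh_nonneg {r : ℝ} (hr : 0 ≤ r) : 0 ≤ arctanh r := by
  rcases eq_or_ne r 1 with rfl | hr1
  · simp [arctanh]
  · have hpos : 0 < |1 - r| := abs_pos.mpr (sub_ne_zero.mpr (Ne.symm hr1))
    have hle : 1 ≤ |(1 + r) / (1 - r)| := by
      rw [abs_div, le_div_iff₀ hpos, one_mul, _root_.abs_of_nonneg (by linarith : (0 : ℝ) ≤ 1 + r)]
      exact abs_le.mpr ⟨by linarith, by linarith⟩
    have := Real.log_nonneg hle
    rw [Real.log_abs] at this
    unfold arctanh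
    positivity

lemma tendsto_arctanh_zero : Tendsto arctanh (𝓝 0) (𝓝 0) := by
  have : ContinuousAt arctanh 0 := by
    unfold arctanh
    fun_prop (disch := norm_num)
  simpa [arctanh] using this.tendsto

lemma diskDist_nonneg (a b : ℂ) : 0 ≤ diskDist a b :=
  arctanh_nonneg (norm_nonneg _)

lemma diskDist_comm (a b : ℂ) : diskDist a b = diskDist b a := by
  have h : ‖1 - (starRingEnd ℂ) a * b‖ = ‖1 - (starRingEnd ℂ) b * a‖ := by
    rw [← Complex.norm_conj (1 - (starRingEnd ℂ) a * b)]
    simp [mul_comm]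
  simp only [diskDist, norm_div, norm_sub_rev a b, h]

lemma diskDist_zero_ofReal {x : ℝ} (hx : 0 ≤ x) : diskDist 0 x = arctanh x := by
  simp [diskDist, _root_.abs_of_nonneg hx]

section Chains

variable {d : ℕ} {D : Set (EuclideanSpace ℂ (Fin d))}

def KobayashiChainLength (D : Set (EuclideanSpace ℂ (Fin d)))
    (p q : EuclideanSpace ℂ (Fin d)) (r : ℝ) : Prop :=
  ∃ (n : ℕ) (φ : Fin (n + 1) → ℂ → EuclideanSpace ℂ (Fin d)) (a b : Fin (n + 1) → ℂ),
    (∀ i, DifferentiableOn ℂ (φ i) (ball (0 : ℂ) 1) ∧ MapsTo (φ i) (ball (0 : ℂ) 1) D ∧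
      a i ∈ ball (0 : ℂ) 1 ∧ b i ∈ ball (0 : ℂ) 1) ∧
    φ 0 (a 0) = p ∧ φ (Fin.last n) (b (Fin.last n)) = q ∧
    (∀ i : Fin n, φ i.castSucc (b i.castSucc) = φ i.succ (a i.succ)) ∧
    r = ∑ i, diskDist (a i) (b i)

namespace KobayashiChainLength

variable {p q : EuclideanSpace ℂ (Fin d)} {r : ℝ}

lemma nonneg (h : KobayashiChainLength D p q r) : 0 ≤ r := by
  obtain ⟨n, φ, a, b, -, -, -, -, rfl⟩ := h
  exact Finset.sum_nonneg fun i _ => diskDist_nonneg _ _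

lemma kobayashiDist_le (h : KobayashiChainLength D p q r) : kobayashiDist D p q ≤ r :=
  csInf_le ⟨0, fun _ hs => nonneg hs⟩ h

variable {f : ℂ → EuclideanSpace ℂ (Fin d)} {a b : ℂ}

lemma disc (hf : DifferentiableOn ℂ f (ball 0 1)) (hfD : MapsTo f (ball 0 1) D)
    (ha : a ∈ ball (0 : ℂ) 1) (hb : b ∈ ball (0 : ℂ) 1) (hfa : f a = p) (hfb : f b = q) :
    KobayashiChainLength D p q (diskDist a b) :=
  ⟨0, fun _ => f, fun _ => a, fun _ => b, fun _ => ⟨hf, hfD, ha, hb⟩, hfa, hfb,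
    fun i => i.elim0, by simp⟩

lemma cons {p' : EuclideanSpace ℂ (Fin d)} (hf : DifferentiableOn ℂ f (ball 0 1))
    (hfD : MapsTo f (ball 0 1) D) (ha : a ∈ ball (0 : ℂ) 1) (hb : b ∈ ball (0 : ℂ) 1)
    (hfa : f a = p) (hfb : f b = p') (h : KobayashiChainLength D p' q r) :
    KobayashiChainLength D p q (diskDist a b + r) := by
  obtain ⟨n, φ, a', b', hdisc, hstart, hend, hlink, rfl⟩ := h
  refine ⟨n + 1, Fin.cons f φ, Fin.cons a a', Fin.cons b b', ?_, hfa, hend, ?_, ?_⟩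
  · exact Fin.cases ⟨hf, hfD, ha, hb⟩ hdisc
  · refine Fin.cases ?_ fun i => ?_
    · simpa [← hstart] using hfb
    · simpa [← Fin.succ_castSucc] using hlink i
  · simp [Fin.sum_univ_succ]

end KobayashiChainLength

end Chains

lemma exists_affine_disc {E : Type*} [NormedAddCommGroup E] [NormedSpace ℂ E] (c v : E)
    {ρ : ℝ} (hρ : 0 < ρ) :
    ∃ f : ℂ → E, Differentiable ℂ f ∧ MapsTo f (ball 0 1) (ball c ρ) ∧ f 0 = c ∧
      f (‖v - c‖ / ρ : ℝ) = v := by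
  refine ⟨fun ζ => c + (ζ * (ρ / ‖v - c‖ : ℝ)) • (v - c), by fun_prop, fun ζ hζ => ?_, by simp,
    ?_⟩
  · rw [mem_ball_zero_iff] at hζ
    rw [mem_ball, dist_eq_norm, add_sub_cancel_left, norm_smul, norm_mul, Complex.norm_real,
      Real.norm_of_nonneg (by positivity), mul_assoc]
    rcases eq_or_ne v c with rfl | hvc
    · simpa using hρ
    · rw [div_mul_cancel₀ _ (norm_ne_zero_iff.mpr (sub_ne_zero.mpr hvc))]
      nlinarith
  · rcases eq_or_ne v c with rfl | hvc
    · simp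
    · have : ‖v - c‖ / ρ * (ρ / ‖v - c‖) = 1 := by
        field_simp [norm_ne_zero_iff.mpr (sub_ne_zero.mpr hvc)]
      simp only [← Complex.ofReal_mul, this, Complex.ofReal_one, one_smul, add_sub_cancel]

lemma re_cayley_nonneg {ζ : ℂ} (hζ : ‖ζ‖ < 1) : 0 ≤ ((1 + ζ) / (1 - ζ)).re := by
  have hsq : ζ.re * ζ.re + ζ.im * ζ.im < 1 := by
    have := Complex.sq_norm ζ
    rw [Complex.normSq_apply] at this
    nlinarith [norm_nonneg ζ]
  rw [Complex.div_re, ← add_div]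
  apply div_nonneg _ (Complex.normSq_nonneg _)
  simp only [Complex.add_re, Complex.sub_re, Complex.one_re, Complex.add_im, Complex.sub_im,
    Complex.one_im]
  nlinarith

lemma one_sub_ne_zero_of_mem_ball {ζ : ℂ} (hζ : ζ ∈ ball (0 : ℂ) 1) : 1 - ζ ≠ 0 := by
  rintro h
  rw [← sub_eq_zero.mp h] at hζ
  simp at hζ

/-- The Cayley map sends the unit disc onto the right half-plane, and `S / (2t + S)` to
`1 + S / t`. -/
lemma exists_flow_disc {E : Type*} [NormedAddCommGroup E] [NormedSpace ℂ E] {X : ℂ → E → E}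
    {D : Set E} (hXadd : ∀ μ ν z, X (μ + ν) z = X μ (X ν z))
    (hXdiff : ∀ z, Differentiable ℂ fun μ => X μ z)
    (hhalf : ∀ μ : ℂ, 0 ≤ μ.re → MapsTo (X μ) D D) {z : E} (hz : z ∈ D) {t S : ℝ}
    (ht : 0 < t) (hS : 0 ≤ S) :
    ∃ f : ℂ → E, DifferentiableOn ℂ f (ball 0 1) ∧ MapsTo f (ball 0 1) D ∧ f 0 = X t z ∧
      f (S / (2 * t + S) : ℝ) = X S (X t z) := by
  refine ⟨fun ζ => X (t * ((1 + ζ) / (1 - ζ))) z, ?_, fun ζ hζ => ?_, by simp, ?_⟩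
  · refine (hXdiff z).comp_differentiableOn (DifferentiableOn.const_mul ?_ _)
    exact (differentiableOn_const _).add differentiableOn_id |>.div
      ((differentiableOn_const _).sub differentiableOn_id) fun _ => one_sub_ne_zero_of_mem_ball
  · refine hhalf _ ?_ hz
    rw [Complex.re_ofReal_mul]
    exact mul_nonneg ht.le (re_cayley_nonneg (mem_ball_zero_iff.mp hζ))
  · have hden : 0 < 2 * t + S := by linarith
    have htime : t * ((1 + S / (2 * t + S)) / (1 - S / (2 * t + S))) = S + t := by
      field_simp
      ring
    simp only [← hXadd]
    exact_mod_cast congrArg (fun s : ℝ => X s z) htime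

section Estimate

variable {d : ℕ} {D : Set (EuclideanSpace ℂ (Fin d))}
  {X : ℂ → EuclideanSpace ℂ (Fin d) → EuclideanSpace ℂ (Fin d)}

/-- The chain: a straight disc from `p` to `X t z`, the Cayley disc along the orbit of `z`
from `X t z` to `X S (X t z)`, and a straight disc from there to `q`. -/
lemma kobayashiDist_le_of_orbit (hXadd : ∀ μ ν z, X (μ + ν) z = X μ (X ν z))
    (hXdiff : ∀ z, Differentiable ℂ fun μ => X μ z)
    (hhalf : ∀ μ : ℂ, 0 ≤ μ.re → MapsTo (X μ) D D) {p q z : EuclideanSpace ℂ (Fin d)}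
    {ρ t S : ℝ} (hρ : 0 < ρ) (hp : ball p ρ ⊆ D) (hq : ball q ρ ⊆ D) (hz : z ∈ D)
    (ht : 0 < t) (hS : 0 ≤ S) (hpt : ‖X t z - p‖ < ρ) (hqt : ‖X S (X t z) - q‖ < ρ) :
    kobayashiDist D p q ≤
      arctanh (‖X t z - p‖ / ρ) + (arctanh (S / (2 * t + S)) +
        arctanh (‖X S (X t z) - q‖ / ρ)) := by
  have mem_ball_ofReal {x : ℝ} (h0 : 0 ≤ x) (h1 : x < 1) : (x : ℂ) ∈ ball (0 : ℂ) 1 := by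
    rwa [mem_ball_zero_iff, Complex.norm_real, Real.norm_of_nonneg h0]
  have hdiv {x : ℝ} (h : x < ρ) : x / ρ < 1 := (div_lt_one hρ).mpr h
  have hβ : S / (2 * t + S) < 1 := (div_lt_one (by linarith)).mpr (by linarith)
  have h0 : (0 : ℂ) ∈ ball (0 : ℂ) 1 := mem_ball_self one_pos
  obtain ⟨f₁, hf₁, hf₁D, hf₁0, hf₁1⟩ := exists_affine_disc p (X t z) hρ
  obtain ⟨f₂, hf₂, hf₂D, hf₂0, hf₂1⟩ := exists_flow_disc hXadd hXdiff hhalf hz ht hS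
  obtain ⟨f₃, hf₃, hf₃D, hf₃0, hf₃1⟩ := exists_affine_disc q (X S (X t z)) hρ
  have chain := KobayashiChainLength.cons hf₁.differentiableOn (hf₁D.mono_right hp) h0
    (mem_ball_ofReal (by positivity) (hdiv hpt)) hf₁0 hf₁1 <|
    KobayashiChainLength.cons hf₂ hf₂D h0 (mem_ball_ofReal (by positivity) hβ) hf₂0 hf₂1 <|
    KobayashiChainLength.disc hf₃.differentiableOn (hf₃D.mono_right hq)
      (mem_ball_ofReal (by positivity) (hdiv hqt)) h0 hf₃1 hf₃0
  rw [diskDist_comm _ 0, diskDist_zero_ofReal (by positivity), diskDist_zero_ofReal (by positivity),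
    diskDist_zero_ofReal (by positivity)] at chain
  exact chain.kobayashiDist_le

lemma kobayashiDist_flow_le_zero (hD : IsOpen D) (hXadd : ∀ μ ν z, X (μ + ν) z = X μ (X ν z))
    (hXdiff : ∀ z, Differentiable ℂ fun μ => X μ z)
    (hhalf : ∀ μ : ℂ, 0 ≤ μ.re → MapsTo (X μ) D D) {S : ℝ} (hS : 0 ≤ S)
    (hXS : Continuous (X S)) {p : EuclideanSpace ℂ (Fin d)} (hp : p ∈ D)
    {z : ℕ → EuclideanSpace ℂ (Fin d)} {t : ℕ → ℝ} (hz : ∀ k, z k ∈ D)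
    (ht : Tendsto t atTop atTop) (hlim : Tendsto (fun k => X (t k) (z k)) atTop (𝓝 p)) :
    kobayashiDist D p (X S p) ≤ 0 := by
  set q := X S p
  obtain ⟨ρ₁, hρ₁, hpD⟩ := Metric.isOpen_iff.mp hD p hp
  obtain ⟨ρ₂, hρ₂, hqD⟩ := Metric.isOpen_iff.mp hD q (hhalf S (by simpa using hS) hp)
  set ρ := min ρ₁ ρ₂
  have hρ : 0 < ρ := lt_min hρ₁ hρ₂
  have hlimp : Tendsto (fun k => ‖X (t k) (z k) - p‖) atTop (𝓝 0) :=
    tendsto_iff_norm_sub_tendsto_zero.mp hlim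
  have hlimq : Tendsto (fun k => ‖X S (X (t k) (z k)) - q‖) atTop (𝓝 0) :=
    tendsto_iff_norm_sub_tendsto_zero.mp ((hXS.tendsto p).comp hlim)
  have hβ : Tendsto (fun k => S / (2 * t k + S)) atTop (𝓝 0) :=
    tendsto_const_nhds.div_atTop <|
      tendsto_atTop_add_const_right _ S (ht.const_mul_atTop two_pos)
  have hbound : Tendsto (fun k => arctanh (‖X (t k) (z k) - p‖ / ρ) +
      (arctanh (S / (2 * t k + S)) + arctanh (‖X S (X (t k) (z k)) - q‖ / ρ))) atTop
      (𝓝 0) := by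
    have harc {u : ℕ → ℝ} (hu : Tendsto u atTop (𝓝 0)) :
        Tendsto (fun k => arctanh (u k)) atTop (𝓝 0) := tendsto_arctanh_zero.comp hu
    simpa using harc (by simpa using hlimp.div_const ρ) |>.add <|
      (harc hβ).add (harc (by simpa using hlimq.div_const ρ))
  refine ge_of_tendsto hbound ?_
  filter_upwards [hlimp.eventually_lt_const hρ, hlimq.eventually_lt_const hρ,
    ht.eventually_gt_atTop 0] with k hkp hkq hkt
  exact kobayashiDist_le_of_orbit hXadd hXdiff hhalf hρ
    ((ball_subset_ball (min_le_left _ _)).trans hpD)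
    ((ball_subset_ball (min_le_right _ _)).trans hqD) (hz k) hkt hS hkp hkq

end Estimate

section Flow

lemma flow_nsmul {M α : Type*} [AddMonoid M] {X : M → α → α} (hX0 : ∀ z, X 0 z = z)
    (hXadd : ∀ μ ν z, X (μ + ν) z = X μ (X ν z)) (μ : M) (n : ℕ) : X (n • μ) = (X μ)^[n] := by
  induction n with
  | zero => funext z; simp [hX0]
  | succ n ih => funext z; rw [succ_nsmul, Function.iterate_succ_apply, hXadd, ih]

lemma mapsTo_flow_of_re_nonneg {α : Type*} {X : ℂ → α → α} {D : Set α} (hX0 : ∀ z, X 0 z = z)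
    (hXadd : ∀ μ ν z, X (μ + ν) z = X μ (X ν z)) (hreal : ∀ t : ℝ, 0 ≤ t → MapsTo (X t) D D)
    {δ : ℝ} (hδ : 0 < δ) (himag : ∀ s ∈ Ioo (-δ) δ, MapsTo (X (s * I)) D D) {μ : ℂ}
    (hμ : 0 ≤ μ.re) : MapsTo (X μ) D D := by
  obtain ⟨n, hn⟩ := exists_nat_gt (|μ.im| / δ)
  have hn0 : (0 : ℝ) < n := lt_of_le_of_lt (by positivity) hn
  have hsmall : μ.im / n ∈ Ioo (-δ) δ := by
    rw [mem_Ioo, ← abs_lt, abs_div, Nat.abs_cast, div_lt_iff₀ hn0, mul_comm]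
    rwa [div_lt_iff₀ hδ] at hn
  have hμ_eq : μ = (μ.re : ℂ) + n • (((μ.im / n : ℝ) : ℂ) * I) := by
    rw [nsmul_eq_mul, ← mul_assoc, Complex.ofReal_div, Complex.ofReal_natCast,
      mul_div_cancel₀ _ (by exact_mod_cast hn0.ne'), re_add_im]
  have hcomp : X μ = X μ.re ∘ X (n • (((μ.im / n : ℝ) : ℂ) * I)) := by
    funext z; rw [Function.comp_apply, ← hXadd, ← hμ_eq]
  rw [hcomp, flow_nsmul hX0 hXadd]
  exact (hreal _ hμ).comp ((himag _ hsmall).iterate n)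

variable {E : Type*} [NormedAddCommGroup E]

lemma exists_norm_eq_of_tendsto_zero {γ : ℝ → E} (hγ : Continuous γ)
    (hlim : Tendsto γ atTop (𝓝 0)) {r : ℝ} (hr : 0 < r) (h0 : r ≤ ‖γ 0‖) :
    ∃ τ ≥ 0, ‖γ τ‖ = r := by
  obtain ⟨T, hT, hT0⟩ :=
    ((tendsto_norm_zero.comp hlim).eventually_lt_const hr |>.and (eventually_ge_atTop 0)).exists
  obtain ⟨τ, hτ, hτr⟩ := intermediate_value_Icc' hT0 hγ.norm.continuousOn ⟨hT.le, h0⟩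
  exact ⟨τ, hτ.1, hτr⟩

variable {Φ : ℝ → E → E} (hΦ : Continuous fun p : ℝ × E => Φ p.1 p.2)
  (hΦinv : ∀ t z, Φ (-t) (Φ t z) = z)
include hΦ hΦinv

lemma isBounded_setOf_exists_flow_mem {K : Set E} (hK : IsCompact K) (T : ℝ) :
    Bornology.IsBounded {z | ∃ t ∈ Icc 0 T, Φ t z ∈ K} := by
  refine (((isCompact_Icc (a := -T) (b := 0)).prod hK).image hΦ).isBounded.subset ?_
  rintro z ⟨t, ⟨ht0, htT⟩, htK⟩
  exact ⟨(-t, Φ t z), ⟨⟨by linarith, by linarith⟩, htK⟩, hΦinv t z⟩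

lemma exists_seq_flow_mem_sphere [ProperSpace E] (hΦ0 : ∀ z, Φ 0 z = z)
    (hattr : ∀ z, Tendsto (fun t => Φ t z) atTop (𝓝 0)) {D : Set E}
    (hD : ¬Bornology.IsBounded D) {r : ℝ} (hr : 0 < r) :
    ∃ (z : ℕ → E) (τ : ℕ → ℝ), (∀ k, z k ∈ D) ∧ Tendsto τ atTop atTop ∧
      ∀ k, Φ (τ k) (z k) ∈ sphere 0 r := by
  have hlate (T : ℝ) : ∃ z ∈ D, ∃ τ ≥ T, Φ τ z ∈ sphere 0 r := by
    have hB := (isBounded_setOf_exists_flow_mem hΦ hΦinv (isCompact_closedBall 0 r) T).union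
      (isBounded_closedBall (x := (0 : E)) (r := r))
    obtain ⟨z, hzD, hzB⟩ := not_subset.mp fun h => hD (hB.subset h)
    simp only [mem_union, mem_ofPred_eq, mem_closedBall_zero_iff, not_or, not_exists, not_and,
      not_le] at hzB
    obtain ⟨τ, hτ0, hτr⟩ := exists_norm_eq_of_tendsto_zero (γ := fun t => Φ t z)
      (hΦ.comp (continuous_id.prodMk continuous_const)) (hattr z) hr (by simpa [hΦ0] using hzB.2.le)
    refine ⟨z, hzD, τ, not_lt.mp fun hτT => ?_, mem_sphere_zero_iff_norm.mpr hτr⟩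
    exact (hzB.1 τ ⟨hτ0, hτT.le⟩).ne hτr.symm
  choose z hzD τ hτ hzτ using fun k : ℕ => hlate k
  exact ⟨z, τ, hzD, tendsto_atTop_mono hτ tendsto_natCast_atTop_atTop, hzτ⟩

end Flow

theorem stmt16_general {d : ℕ} (D : Set (EuclideanSpace ℂ (Fin d)))
    (hD : IsOpen D) (h0 : (0 : EuclideanSpace ℂ (Fin d)) ∈ D)
    (V : EuclideanSpace ℂ (Fin d) → EuclideanSpace ℂ (Fin d))
    (X : ℂ → EuclideanSpace ℂ (Fin d) → EuclideanSpace ℂ (Fin d))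
    (hX0 : ∀ z, X 0 z = z)
    (hXadd : ∀ lam mu z, X (lam + mu) z = X lam (X mu z))
    (hXflow : ∀ z lam, HasDerivAt (fun mu => X mu z) (V (X lam z)) lam)
    (hXcont : Continuous fun p : ℂ × EuclideanSpace ℂ (Fin d) => X p.1 p.2)
    (hattr : ∀ z, Tendsto (fun t : ℝ => X (t : ℂ) z) atTop (nhds 0))
    (hspiral : ∀ t : ℝ, 0 ≤ t → ∀ z ∈ D, X (t : ℂ) z ∈ D)
    (hcirc : ∀ s : ℝ, s ∈ Ioo (-(Real.pi / 2)) (Real.pi / 2) → ∀ z ∈ D,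
      X ((s : ℂ) * Complex.I) z ∈ D)
    (hhyp : KobayashiHyperbolic D) :
    Bornology.IsBounded D := by
  by_contra hunb
  have hhalf : ∀ μ : ℂ, 0 ≤ μ.re → MapsTo (X μ) D D := fun μ =>
    mapsTo_flow_of_re_nonneg hX0 hXadd hspiral (by positivity) hcirc
  have hXdiff : ∀ z, Differentiable ℂ fun μ => X μ z := fun z μ => (hXflow z μ).differentiableAt
  obtain ⟨r, hr, hrD⟩ := Metric.isOpen_iff.mp hD 0 h0
  obtain ⟨z, τ, hzD, hτ, hzr⟩ := exists_seq_flow_mem_sphere (Φ := fun t : ℝ => X t)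
    (hXcont.comp (continuous_ofReal.prodMap continuous_id))
    (fun t z => by simp [← hXadd, hX0]) (fun z => by simpa using hX0 z) hattr hunb (half_pos hr)
  obtain ⟨w, hw, φ, hφ, hlim⟩ := (isCompact_sphere 0 (r / 2)).tendsto_subseq hzr
  have hwD : w ∈ D := hrD (sphere_subset_ball (half_lt_self hr) hw)
  have hw0 : w ≠ 0 := ne_of_mem_sphere hw (half_pos hr).ne'
  obtain ⟨S, hSw, hS⟩ := ((hattr w).eventually_ne hw0.symm |>.and (eventually_ge_atTop 0)).exists
  have hle := kobayashiDist_flow_le_zero hD hXadd hXdiff hhalf hS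
    (hXcont.comp (continuous_const.prodMk continuous_id)) hwD (fun k => hzD (φ k))
    (hτ.comp hφ.tendsto_atTop) hlim
  exact (hhyp w hwD _ (hhalf S (by simpa using hS) hwD) (Ne.symm hSw)).not_ge hle

/-- Main theorem (H(3) ⟹ H(1)): a Kobayashi hyperbolic domain `D ⊂ ℂ^d` containing the
origin, circularlike and spirallike with respect to (the complex-time flow `X` of) a complete
globally asymptotically stable holomorphic vector field `V` with `V(0) = 0`, is bounded
(equivalently, it contains no sequence with `‖z_k‖ → ∞`). -/
theorem stmt16 {d : ℕ} (D : Set (EuclideanSpace ℂ (Fin d)))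
    (hD : IsOpen D) (hDconn : IsConnected D) (h0 : (0 : EuclideanSpace ℂ (Fin d)) ∈ D)
    (V : EuclideanSpace ℂ (Fin d) → EuclideanSpace ℂ (Fin d))
    (hV : Differentiable ℂ V) (hV0 : V 0 = 0)
    (X : ℂ → EuclideanSpace ℂ (Fin d) → EuclideanSpace ℂ (Fin d))
    (hX0 : ∀ z, X 0 z = z)
    (hXadd : ∀ lam mu z, X (lam + mu) z = X lam (X mu z))
    (hXflow : ∀ z lam, HasDerivAt (fun mu => X mu z) (V (X lam z)) lam)
    (hXcont : Continuous fun p : ℂ × EuclideanSpace ℂ (Fin d) => X p.1 p.2)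
    (hstab : ∀ ε > (0 : ℝ), ∃ δ > (0 : ℝ), ∀ t : ℝ, 0 ≤ t → ∀ z, ‖z‖ < δ →
      ‖X (t : ℂ) z‖ < ε)
    (hattr : ∀ z, Tendsto (fun t : ℝ => X (t : ℂ) z) atTop (nhds 0))
    (hspiral : ∀ t : ℝ, 0 ≤ t → ∀ z ∈ D, X (t : ℂ) z ∈ D)
    (hcirc : ∀ s : ℝ, s ∈ Ioo (-(Real.pi / 2)) (Real.pi / 2) → ∀ z ∈ D,
      X ((s : ℂ) * Complex.I) z ∈ D)
    (hhyp : KobayashiHyperbolic D) :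
    Bornology.IsBounded D :=
  stmt16_general D hD h0 V X hX0 hXadd hXflow hXcont hattr hspiral hcirc hhyp
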